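/- arXiv:0810.2876 — 5 statements merged into one kernel-verified Lean document; each statement's English description precedes it below -/
import Mathlib

section
/- Let n ≥ 1 and let π be a permutation of {1,…,n} with right inversion vector (c_1,…,c_n), where c_i = #{j : i < j ≤ n and π(j) < π(i)}. Then π is 321-avoiding if and only if for every pair of indices i < j with c_i ≠ 0, c_j ≠ 0, and c_k = 0 for all k with i < k < j, one has c_i − c_j ≤ j − i − 1 (i.e., the number of zero entries between two consecutive nonzero entries c_i and c_j is at least c_i − c_j). -/
/-- The right inversion vector of a permutation `π` of `{1,…,n}` (0-indexed as `Fin n`):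
`c i = #{j : i < j ≤ n and π(j) < π(i)}`. -/
def rightInvVector {n : ℕ} (π : Equiv.Perm (Fin n)) (i : Fin n) : ℕ :=
  (Finset.univ.filter fun j => i < j ∧ π j < π i).card

/-- `π` is 321-avoiding: there are no positions `i < j < k` with `π(i) > π(j) > π(k)`. -/
def Avoids321 {n : ℕ} (π : Equiv.Perm (Fin n)) : Prop :=
  ¬ ∃ i j k : Fin n, i < j ∧ j < k ∧ π k < π j ∧ π j < π i

lemma riv_ne_zero_iff {n : ℕ} (π : Equiv.Perm (Fin n)) (i : Fin n) :
    rightInvVector π i ≠ 0 ↔ ∃ j, i < j ∧ π j < π i := by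
  unfold rightInvVector
  rw [← Nat.pos_iff_ne_zero, Finset.card_pos]
  constructor
  · rintro ⟨j, hj⟩
    simp only [Finset.mem_filter] at hj
    exact ⟨j, hj.2⟩
  · rintro ⟨j, hj⟩
    exact ⟨j, by simp [hj]⟩

lemma riv_zero {n : ℕ} (π : Equiv.Perm (Fin n)) (i : Fin n)
    (h : rightInvVector π i = 0) : ∀ j, i < j → π i ≤ π j := by
  intro j hj
  by_contra hc
  push_neg at hc
  exact (riv_ne_zero_iff π i).mpr ⟨j, hj, hc⟩ h

/-- `π` is 321-avoiding iff for every pair of consecutive nonzero entries `c_i, c_j`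
(`i < j`, all entries strictly between being zero) of its right inversion vector,
one has `c_i - c_j ≤ j - i - 1`. -/
theorem stmt_1 (n : ℕ) (hn : 1 ≤ n) (π : Equiv.Perm (Fin n)) :
    Avoids321 π ↔
      ∀ i j : Fin n, i < j → rightInvVector π i ≠ 0 → rightInvVector π j ≠ 0 →
        (∀ k : Fin n, i < k → k < j → rightInvVector π k = 0) →
        rightInvVector π i - rightInvVector π j ≤ j.val - i.val - 1 := by
  constructor
  · intro hav i j hij hci hcj _hzero
    have hπij : π i < π j := by
      rcases lt_trichotomy (π i) (π j) with h | h | h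
      · exact h
      · exact absurd (π.injective h) (by intro he; exact absurd he (Fin.ne_of_lt hij))
      · obtain ⟨k, hjk, hk⟩ := (riv_ne_zero_iff π j).mp hcj
        exact absurd ⟨i, j, k, hij, hjk, hk, h⟩ hav
    have hsub : (Finset.univ.filter fun m => i < m ∧ π m < π i) ⊆
        (Finset.univ.filter fun m => j < m ∧ π m < π j) ∪ Finset.Ioo i j := by
      intro m hm
      simp only [Finset.mem_filter, Finset.mem_union, Finset.mem_Ioo, Finset.mem_univ,
        true_and] at hm ⊢
      rcases lt_trichotomy m j with h | h | h
      · exact Or.inr ⟨hm.1, h⟩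
      · exact absurd (h ▸ hm.2) (not_lt.mpr hπij.le)
      · exact Or.inl ⟨h, hm.2.trans hπij⟩
    have hle : rightInvVector π i ≤ rightInvVector π j + (j.val - i.val - 1) := by
      calc rightInvVector π i
          ≤ ((Finset.univ.filter fun m => j < m ∧ π m < π j) ∪ Finset.Ioo i j).card :=
            Finset.card_le_card hsub
        _ ≤ rightInvVector π j + (Finset.Ioo i j).card := Finset.card_union_le _ _
        _ = rightInvVector π j + (j.val - i.val - 1) := by rw [Fin.card_Ioo]
    omega
  · intro hcond
    rintro ⟨i, j, k, hij, hjk, h1, h2⟩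
    classical
    set c := rightInvVector π with hc
    have hQ : ∃ d, ∃ a b : Fin n, a < b ∧ (b : ℕ) - a = d ∧ c a ≠ 0 ∧ c b ≠ 0 ∧ π b < π a :=
      ⟨_, i, j, hij, rfl, (riv_ne_zero_iff π i).mpr ⟨j, hij, h2⟩,
        (riv_ne_zero_iff π j).mpr ⟨k, hjk, h1⟩, h2⟩
    obtain ⟨a, b, hab, hd, hca, hcb, hπba⟩ := Nat.find_spec hQ
    have hmin := fun d' (h : d' < Nat.find hQ) => Nat.find_min hQ h
    -- all entries strictly between a and b are zero
    have hz : ∀ t : Fin n, a < t → t < b → c t = 0 := by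
      intro t hat htb
      by_contra hct
      rcases lt_or_ge (π t) (π a) with h | h
      · exact hmin ((t : ℕ) - a) (by omega) ⟨a, t, hat, rfl, hca, hct, h⟩
      · exact hmin ((b : ℕ) - t) (by omega) ⟨t, b, htb, rfl, hct, hcb, lt_of_lt_of_le hπba h⟩
    have hkey := hcond a b hab hca hcb hz
    -- show c a ≥ (b - a) + c b, contradicting hkey
    obtain ⟨w, hbw, hw⟩ := (riv_ne_zero_iff π b).mp hcb
    have hsub : Finset.Ioc a b ∪ (Finset.univ.filter fun m => b < m ∧ π m < π b) ⊆
        (Finset.univ.filter fun m => a < m ∧ π m < π a) := by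
      intro m hm
      simp only [Finset.mem_filter, Finset.mem_union, Finset.mem_Ioc, Finset.mem_univ,
        true_and] at hm ⊢
      rcases hm with ⟨ham, hmb⟩ | ⟨hbm, hmv⟩
      · rcases eq_or_lt_of_le hmb with h | h
        · exact ⟨ham, by rw [h]; exact hπba⟩
        · refine ⟨ham, ?_⟩
          have hmw : π m ≤ π w := riv_zero π m (hz m ham h) w (h.trans hbw)
          exact lt_of_le_of_lt hmw (hw.trans hπba)
      · exact ⟨hab.trans hbm, hmv.trans hπba⟩
    have hdisj : Disjoint (Finset.Ioc a b)
        (Finset.univ.filter fun m => b < m ∧ π m < π b) := by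
      rw [Finset.disjoint_left]
      intro m hm hm'
      simp only [Finset.mem_Ioc] at hm
      simp only [Finset.mem_filter] at hm'
      exact absurd hm'.2.1 (not_lt.mpr hm.2)
    have hge : (b : ℕ) - a + c b ≤ c a := by
      calc (b : ℕ) - a + c b
          = (Finset.Ioc a b ∪ (Finset.univ.filter fun m => b < m ∧ π m < π b)).card := by
            rw [Finset.card_union_of_disjoint hdisj, Fin.card_Ioc]; rfl
        _ ≤ c a := Finset.card_le_card hsub
    have : (1 : ℕ) ≤ (b : ℕ) - a := by
      have := hab
      omega
    omega
end

section
/- Let n ≥ 1 and let π be a permutation of {1,…,n}. For each j ∈ {1,…,n} let d_j = #{m : 1 ≤ m < j and π⁻¹(m) > π⁻¹(j)} (the number of values smaller than j appearing after j in the one-line word of π). Then π is 321-avoiding if and only if for every pair of indices j < j' with d_j ≠ 0, d_{j'} ≠ 0, and d_k = 0 for all k with j < k < j', one has d_{j'} − d_j ≤ j' − j − 1. -/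
/-- For a permutation `π` of `{1,…,n}` (0-indexed as `Fin n`), `d j` is the number of
values `m < j` appearing to the right of `j` in the one-line word of `π`, i.e.
`d j = #{m : m < j and π⁻¹(m) > π⁻¹(j)}`. -/
def dVector {n : ℕ} (π : Equiv.Perm (Fin n)) (j : Fin n) : ℕ :=
  (Finset.univ.filter fun m => m < j ∧ π⁻¹ j < π⁻¹ m).card

/-!
Call `v` a left-to-right maximum of `π` if every larger value appears after it in the one-line
word. If `π` avoids 321, every `v` with `d v ≠ 0` is one (a larger value before `v` would
complete a 321 with `v` and a smaller value after it), and for a left-to-right maximum the values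
below `v` split into the `d v` ones after it and the `π⁻¹ v` ones before it, so
`d v = v - π⁻¹ v`; the inequality follows since positions of left-to-right maxima increase.

Conversely, from a 321 pattern take the largest `b` with `d b ≠ 0` that is not a left-to-right
maximum, and `a` the smallest larger value before `b`. Every value of `[b, a)` lies after `a`,
hence `d a ≥ d b + (a - b)`, and by maximality of `b` all `d` strictly between `b` and `a` vanish.
-/

section

variable {n : ℕ} {π : Equiv.Perm (Fin n)}

def IsLeftToRightMax (π : Equiv.Perm (Fin n)) (v : Fin n) : Prop :=
  ∀ a, v < a → π⁻¹ v < π⁻¹ a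

lemma dVector_ne_zero_iff {v : Fin n} :
    dVector π v ≠ 0 ↔ ∃ c, c < v ∧ π⁻¹ v < π⁻¹ c := by
  simp [dVector]

lemma Avoids321.isLeftToRightMax (h : Avoids321 π) {v : Fin n} (hv : dVector π v ≠ 0) :
    IsLeftToRightMax π v := by
  intro a hva
  obtain ⟨c, hcv, hvc⟩ := dVector_ne_zero_iff.mp hv
  refine lt_of_not_ge fun hav => h ⟨π⁻¹ a, π⁻¹ v, π⁻¹ c, ?_, hvc, by simpa using hcv, ?_⟩
  · exact hav.lt_of_ne (π⁻¹.injective.ne hva.ne')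
  · simpa using hva

lemma IsLeftToRightMax.dVector_add_inv_apply {v : Fin n} (hv : IsLeftToRightMax π v) :
    dVector π v + (π⁻¹ v : ℕ) = v := by
  have hbefore :
      (Finset.univ.filter fun m => m < v ∧ ¬ π⁻¹ v < π⁻¹ m).card = (π⁻¹ v : ℕ) := by
    rw [← Fin.card_Iio (π⁻¹ v)]
    refine Finset.card_equiv π⁻¹ fun m => ?_
    simp only [Finset.mem_filter, Finset.mem_univ, true_and, Finset.mem_Iio, not_lt]
    constructor
    · rintro ⟨hmv, hle⟩
      exact hle.lt_of_ne (π⁻¹.injective.ne hmv.ne)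
    · intro hlt
      refine ⟨lt_of_not_ge fun hvm => ?_, hlt.le⟩
      rcases hvm.eq_or_lt with rfl | hvm
      · exact hlt.false
      · exact (hv m hvm).not_gt hlt
  rw [dVector, ← hbefore, ← Finset.filter_filter, ← Finset.filter_filter,
    Finset.card_filter_add_card_filter_not, Finset.filter_gt_eq_Iio, Fin.card_Iio]

lemma exists_max_dVector_ne_zero_not_isLeftToRightMax (h : ¬ Avoids321 π) :
    ∃ b, dVector π b ≠ 0 ∧ ¬ IsLeftToRightMax π b ∧
      ∀ v, b < v → dVector π v ≠ 0 → IsLeftToRightMax π v := by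
  classical
  obtain ⟨i, j, k, hij, hjk, hkj, hji⟩ := not_not.mp h
  have hne :
      (Finset.univ.filter fun v => dVector π v ≠ 0 ∧ ¬ IsLeftToRightMax π v).Nonempty := by
    refine ⟨π j, Finset.mem_filter.mpr ⟨Finset.mem_univ _, ?_, ?_⟩⟩
    · exact dVector_ne_zero_iff.mpr ⟨π k, hkj, by simpa using hjk⟩
    · exact fun hlr => (hlr (π i) hji).not_gt (by simpa using hij)
  obtain ⟨b, hb, hmax⟩ := Finset.exists_max_image _ id hne
  obtain ⟨-, hdb, hnb⟩ := Finset.mem_filter.mp hb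
  refine ⟨b, hdb, hnb, fun v hbv hdv => ?_⟩
  by_contra hnv
  exact (hmax v (Finset.mem_filter.mpr ⟨Finset.mem_univ _, hdv, hnv⟩)).not_gt hbv

lemma exists_lt_forall_Ico_inv_lt_of_not_isLeftToRightMax {b : Fin n}
    (hb : ¬ IsLeftToRightMax π b) :
    ∃ a, b < a ∧ ∀ m, b ≤ m → m < a → π⁻¹ a < π⁻¹ m := by
  have hne : (Finset.univ.filter fun w => b < w ∧ π⁻¹ w < π⁻¹ b).Nonempty := by
    simp only [IsLeftToRightMax, not_forall, not_lt] at hb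
    obtain ⟨w, hbw, hwb⟩ := hb
    exact ⟨w, by simpa [hbw] using hwb.lt_of_ne (π⁻¹.injective.ne hbw.ne')⟩
  obtain ⟨a, ha, hmin⟩ := Finset.exists_min_image _ id hne
  obtain ⟨-, hba, hab⟩ := Finset.mem_filter.mp ha
  refine ⟨a, hba, fun m hbm hma => ?_⟩
  rcases hbm.eq_or_lt with rfl | hbm
  · exact hab
  · have hm : ¬ π⁻¹ m < π⁻¹ b := fun hmb =>
      (hmin m (Finset.mem_filter.mpr ⟨Finset.mem_univ _, hbm, hmb⟩)).not_gt hma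
    exact hab.trans_le (not_lt.mp hm)

lemma dVector_add_sub_le {a b : Fin n} (hba : b < a)
    (hIco : ∀ m, b ≤ m → m < a → π⁻¹ a < π⁻¹ m) :
    dVector π b + ((a : ℕ) - b) ≤ dVector π a := by
  have hsub : (Finset.univ.filter fun m => m < b ∧ π⁻¹ b < π⁻¹ m) ∪ Finset.Ico b a
      ⊆ Finset.univ.filter fun m => m < a ∧ π⁻¹ a < π⁻¹ m := by
    intro m hm
    simp only [Finset.mem_union, Finset.mem_filter, Finset.mem_univ, true_and,
      Finset.mem_Ico] at hm ⊢
    rcases hm with ⟨hmb, hbm⟩ | ⟨hbm, hma⟩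
    · exact ⟨hmb.trans hba, (hIco b le_rfl hba).trans hbm⟩
    · exact ⟨hma, hIco m hbm hma⟩
  have hdisj :
      Disjoint (Finset.univ.filter fun m => m < b ∧ π⁻¹ b < π⁻¹ m) (Finset.Ico b a) :=
    Finset.disjoint_left.mpr fun m hm hm' =>
      (Finset.mem_filter.mp hm).2.1.not_ge (Finset.mem_Ico.mp hm').1
  have hcard := Finset.card_le_card hsub
  rwa [Finset.card_union_of_disjoint hdisj, Fin.card_Ico] at hcard

end

theorem stmt_2_general (n : ℕ) (π : Equiv.Perm (Fin n)) :
    Avoids321 π ↔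
      ∀ j j' : Fin n, j < j' → dVector π j ≠ 0 → dVector π j' ≠ 0 →
        (∀ k : Fin n, j < k → k < j' → dVector π k = 0) →
        dVector π j' - dVector π j ≤ j'.val - j.val - 1 := by
  constructor
  · intro h j j' hjj' hdj hdj' _
    have hj := (h.isLeftToRightMax hdj).dVector_add_inv_apply
    have hj' := (h.isLeftToRightMax hdj').dVector_add_inv_apply
    have hpos : (π⁻¹ j : ℕ) < π⁻¹ j' := h.isLeftToRightMax hdj j' hjj'
    omega
  · intro H
    by_contra h321
    obtain ⟨b, hdb, hb, hmax⟩ := exists_max_dVector_ne_zero_not_isLeftToRightMax h321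
    obtain ⟨a, hba, hIco⟩ := exists_lt_forall_Ico_inv_lt_of_not_isLeftToRightMax hb
    have hjump := dVector_add_sub_le hba hIco
    have hzero : ∀ m, b < m → m < a → dVector π m = 0 := fun m hbm hma =>
      by_contra fun hdm => (hmax m hbm hdm a hma).not_gt (hIco m hbm.le hma)
    have hba' : (b : ℕ) < a := hba
    have := H b a hba hdb (by omega) hzero
    omega

/-- `π` is 321-avoiding iff for every pair of consecutive nonzero entries `d_j, d_j'`
(`j < j'`, all entries strictly between being zero) of the vector `d`,
one has `d_j' - d_j ≤ j' - j - 1`. -/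
theorem stmt_2 (n : ℕ) (hn : 1 ≤ n) (π : Equiv.Perm (Fin n)) :
    Avoids321 π ↔
      ∀ j j' : Fin n, j < j' → dVector π j ≠ 0 → dVector π j' ≠ 0 →
        (∀ k : Fin n, j < k → k < j' → dVector π k = 0) →
        dVector π j' - dVector π j ≤ j'.val - j.val - 1 :=
  stmt_2_general n π
end

section
/- Let n ≥ 1 and let π be a 321-avoiding permutation of {1,…,n}. For each j ∈ {1,…,n} let d_j = #{m : 1 ≤ m < j and π⁻¹(m) > π⁻¹(j)}. Suppose not all d_j are zero, and let s = max{j : d_j ≠ 0}. Then the length of the last ascending run of π, i.e., the largest m such that π(n−m+1) < π(n−m+2) < … < π(n), equals d_s + (n − s). -/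
/-!
Let `p = π⁻¹ s` be the position of `s`. Every `j > s` has `d j = 0`, i.e. all smaller values
precede it, so `j ≤ π⁻¹ j`; as `π⁻¹` permutes `{j > s}`, this forces `π` to fix every value
above `s`. Hence the positions `p < t ≤ s` carry exactly the values below `s` that follow `s`,
so `d s = s - p`, and `π (p + 1) < s = π p` is a descent. Past `p` the word is increasing: among
positions `p < i < j ≤ s` a descent would form a `321` with `s`, and beyond `s` everything is fixed.
So the last run has length `n - 1 - p = d s + (n - (s + 1))`.
-/

theorem apply_eq_self_of_mapsTo_of_le {n : ℕ} {T : Finset (Fin n)} {f : Fin n → Fin n}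
    (hinj : Set.InjOn f T) (hmaps : Set.MapsTo f T T) (hle : ∀ x ∈ T, x ≤ f x)
    {x : Fin n} (hx : x ∈ T) : f x = x := by
  have himage : T.image f = T :=
    Finset.eq_of_subset_of_card_le (Finset.image_subset_iff.2 hmaps)
      (Finset.card_image_of_injOn hinj).ge
  have hsum : ∑ y ∈ T, y.val = ∑ y ∈ T, (f y).val := by
    conv_lhs => rw [← himage]
    rw [Finset.sum_image hinj]
  exact Fin.ext ((Finset.sum_eq_sum_iff_of_le (f := Fin.val) (g := fun y => (f y).val)
    fun y hy => Fin.le_def.1 (hle y hy)).1 hsum x hx).symm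

theorem isGreatest_lastRun {α : Type*} [Preorder α] {n : ℕ} (f : Fin n → α) (p : Fin n)
    (hp : p.val + 1 < n) (hinc : ∀ i j : Fin n, p < i → i < j → f i < f j)
    (hdesc : f ⟨p.val + 1, hp⟩ < f p) :
    IsGreatest {m : ℕ | 1 ≤ m ∧ m ≤ n ∧ ∀ i j : Fin n, n - m ≤ i.val → i < j → f i < f j}
      (n - 1 - p.val) := by
  refine ⟨⟨by omega, by omega, fun i j hi hij => hinc i j (by rw [Fin.lt_def]; omega) hij⟩, ?_⟩
  rintro m ⟨-, -, hrun⟩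
  by_contra! hlong
  exact lt_asymm hdesc (hrun p ⟨p.val + 1, hp⟩ (by omega) (by simp [Fin.lt_def]))

section Permutation

variable {n : ℕ} (π : Equiv.Perm (Fin n))

theorem le_inv_apply_of_dVector_eq_zero {j : Fin n} (hj : dVector π j = 0) : j ≤ π⁻¹ j := by
  have hbefore : ∀ m ≤ j, π⁻¹ m ≤ π⁻¹ j := by
    intro m hm
    rcases hm.lt_or_eq with hm | rfl
    · rw [dVector, Finset.card_eq_zero, Finset.filter_eq_empty_iff] at hj
      exact not_lt.1 fun h => hj (Finset.mem_univ m) ⟨hm, h⟩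
    · rfl
  have hcard : (Finset.Iic j).card ≤ (Finset.Iic (π⁻¹ j)).card :=
    Finset.card_le_card_of_injOn ⇑π⁻¹
      (fun m hm => by simpa using hbefore m (by simpa using hm)) π⁻¹.injective.injOn
  rw [Fin.card_Iic, Fin.card_Iic] at hcard
  exact Fin.le_def.2 (by omega)

theorem apply_eq_self_of_dVector_eq_zero {s : Fin n} (hzero : ∀ j, s < j → dVector π j = 0)
    {j : Fin n} (hj : s < j) : π j = j := by
  have hle : ∀ x ∈ Finset.Ioi s, x ≤ π⁻¹ x := fun x hx =>
    le_inv_apply_of_dVector_eq_zero π (hzero x (Finset.mem_Ioi.1 hx))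
  have hmaps : Set.MapsTo ⇑π⁻¹ (Finset.Ioi s) (Finset.Ioi s) := fun x hx =>
    Finset.mem_Ioi.2 ((Finset.mem_Ioi.1 hx).trans_le (hle x hx))
  exact (Equiv.Perm.inv_eq_iff_eq.1
    (apply_eq_self_of_mapsTo_of_le π⁻¹.injective.injOn hmaps hle (Finset.mem_Ioi.2 hj))).symm

variable {s : Fin n}

theorem apply_le_of_le (hfix : ∀ j, s < j → π j = j) {t : Fin n} (ht : t ≤ s) : π t ≤ s := by
  by_contra! h
  have : π t = t := π.injective (hfix _ h)
  exact (this ▸ h).not_ge ht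

theorem inv_apply_le_of_le (hfix : ∀ j, s < j → π j = j) {m : Fin n} (hm : m ≤ s) :
    π⁻¹ m ≤ s := by
  by_contra! h
  have : π⁻¹ m = m := by simpa using (hfix _ h).symm
  exact (this ▸ h).not_ge hm

theorem apply_lt_of_inv_apply_lt (hfix : ∀ j, s < j → π j = j) {t : Fin n} (hpt : π⁻¹ s < t)
    (hts : t ≤ s) : π t < s :=
  (apply_le_of_le π hfix hts).lt_of_ne fun h => hpt.ne (by simp [← h])

theorem dVector_eq_sub (hfix : ∀ j, s < j → π j = j) : dVector π s = s.val - (π⁻¹ s).val := by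
  have himage : (Finset.univ.filter fun m => m < s ∧ π⁻¹ s < π⁻¹ m).image (π⁻¹ ·) =
      Finset.Ioc (π⁻¹ s) s := by
    ext t
    simp only [Finset.mem_image, Finset.mem_filter, Finset.mem_univ, true_and, Finset.mem_Ioc]
    constructor
    · rintro ⟨m, ⟨hms, hpm⟩, rfl⟩
      exact ⟨hpm, inv_apply_le_of_le π hfix hms.le⟩
    · rintro ⟨hpt, hts⟩
      exact ⟨π t, ⟨apply_lt_of_inv_apply_lt π hfix hpt hts, by simpa using hpt⟩, by simp⟩
  rw [dVector, ← Fin.card_Ioc, ← himage, Finset.card_image_of_injective _ π⁻¹.injective]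

theorem apply_lt_apply_of_inv_apply_lt (hfix : ∀ j, s < j → π j = j) (h321 : Avoids321 π)
    {i j : Fin n} (hpi : π⁻¹ s < i) (hij : i < j) : π i < π j := by
  rcases lt_or_ge s j with hsj | hjs
  · rw [hfix j hsj]
    rcases lt_or_ge s i with hsi | his
    · rwa [hfix i hsi]
    · exact (apply_le_of_le π hfix his).trans_lt hsj
  · refine (π.injective.ne hij.ne).lt_of_le (not_lt.1 fun hji => h321 ?_)
    refine ⟨π⁻¹ s, i, j, hpi, hij, hji, ?_⟩
    simpa using apply_lt_of_inv_apply_lt π hfix hpi (hij.le.trans hjs)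

end Permutation

theorem stmt_3_general (n : ℕ) (π : Equiv.Perm (Fin n))
    (h321 : Avoids321 π)
    (s : Fin n) (hs : dVector π s ≠ 0) (hmax : ∀ j : Fin n, dVector π j ≠ 0 → j ≤ s) :
    IsGreatest {m : ℕ | 1 ≤ m ∧ m ≤ n ∧
        ∀ i j : Fin n, n - m ≤ i.val → i < j → π i < π j}
      (dVector π s + (n - (s.val + 1))) := by
  have hfix : ∀ j, s < j → π j = j := fun j =>
    apply_eq_self_of_dVector_eq_zero π fun j hj => not_not.1 fun h => (hmax j h).not_gt hj
  have hds := dVector_eq_sub π hfix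
  set p := π⁻¹ s
  have hps : p < s := by rw [Fin.lt_def]; omega
  have hp : p.val + 1 < n := by omega
  rw [show dVector π s + (n - (s.val + 1)) = n - 1 - p.val by omega]
  refine isGreatest_lastRun π p hp (fun i j => apply_lt_apply_of_inv_apply_lt π hfix h321) ?_
  simpa [p] using apply_lt_of_inv_apply_lt π hfix (t := ⟨p.val + 1, hp⟩)
    (Fin.lt_def.2 (Nat.lt_succ_self _)) (Fin.le_def.2 (show p.val + 1 ≤ s.val by omega))

/-- For a 321-avoiding permutation `π` of `{1,…,n}` whose vector `d` is not identically
zero, with `s` the largest index with `d s ≠ 0`, the length of the last ascending run of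
`π` (the largest `m ∈ {1,…,n}` such that the last `m` entries of the one-line word are
increasing) equals `d s + (n - s)` (0-indexed: `d s + (n - (s+1))`). -/
theorem stmt_3 (n : ℕ) (hn : 1 ≤ n) (π : Equiv.Perm (Fin n))
    (h321 : Avoids321 π)
    (s : Fin n) (hs : dVector π s ≠ 0) (hmax : ∀ j : Fin n, dVector π j ≠ 0 → j ≤ s) :
    IsGreatest {m : ℕ | 1 ≤ m ∧ m ≤ n ∧
        ∀ i j : Fin n, n - m ≤ i.val → i < j → π i < π j}
      (dVector π s + (n - (s.val + 1))) :=
  stmt_3_general n π h321 s hs hmax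
end

section
/- Let n ≥ 1. The map sending a permutation π of {1,…,n} to the pair ((s_1,…,s_r), w), where s_1, …, s_r are the lengths of the cycles of π listed in standard cycle order (cycles ordered by increasing smallest elements) and w is the word obtained from the standard cycle form of π by erasing parentheses, is a bijection from the set of permutations of {1,…,n} onto the set of pairs ((s_1,…,s_r), w) such that (s_1,…,s_r) is a composition of n (a finite sequence of positive integers with s_1 + … + s_r = n), w is a permutation word of {1,…,n}, and for each t ∈ {1,…,r} the right inversion vector of w vanishes at position p_t = 1 + s_1 + … + s_{t−1} (i.e., w_{p_t} < w_q for all q > p_t). -/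
/-!
Give each point `x` the key `(cycleMin π x, cycleIdx π x)`, ordered lexicographically. The
standard cycle word lists the points by increasing key, so each cycle fills a block of
consecutive positions opening with its minimum, which is then smaller than every later letter.
Conversely, for a composition and a word with right-to-left minima at the block starts, rotating
every block by one step gives a permutation with these data. It is the only one: a standard cycle
word forces the letter at position `q` to have key (letter at the start of the block of `q`,
distance from that start), and a permutation is determined by its keys.
-/

/-- The smallest element of the cycle of `π` containing `x`. -/
def cycleMin {n : ℕ} (π : Equiv.Perm (Fin n)) (x : Fin n) : Fin n :=
  (Finset.univ.filter fun y => π.SameCycle x y).min'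
    ⟨x, by simp [Equiv.Perm.SameCycle.refl]⟩

/-- The number of steps needed to reach `x` from the smallest element of its cycle,
i.e. the least `l` with `π^l (cycleMin π x) = x`. -/
noncomputable def cycleIdx {n : ℕ} (π : Equiv.Perm (Fin n)) (x : Fin n) : ℕ :=
  sInf {l : ℕ | (π ^ l) (cycleMin π x) = x}

/-- `w` is the word obtained by erasing the parentheses in the standard cycle form of `π`
(cycles ordered by increasing smallest elements, each cycle starting with its smallest
element): equivalently, `w` lists the elements of `{1,…,n}` sorted lexicographically by
(smallest element of their cycle, number of steps from that smallest element). -/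
def IsStdCycleWord {n : ℕ} (π : Equiv.Perm (Fin n)) (w : Fin n → Fin n) : Prop :=
  Function.Bijective w ∧ ∀ p q : Fin n, p < q →
    cycleMin π (w p) < cycleMin π (w q) ∨
      (cycleMin π (w p) = cycleMin π (w q) ∧ cycleIdx π (w p) < cycleIdx π (w q))

/-- `sw = (s, w)` is the standard cycle data of `π`: `w` is the word of the standard cycle
form of `π` and `s` is the list of cycle lengths of `π` in standard cycle order; the latter
is expressed by saying that the entries of `s` are positive, sum to `n`, and the positions
where cycles of `π` begin in `w` are exactly the partial sums `s_1 + … + s_{t-1}`. -/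
def StdCycleData {n : ℕ} (π : Equiv.Perm (Fin n)) (sw : List ℕ × (Fin n → Fin n)) : Prop :=
  IsStdCycleWord π sw.2 ∧ (∀ a ∈ sw.1, 0 < a) ∧ sw.1.sum = n ∧
    ∀ p : Fin n, cycleIdx π (sw.2 p) = 0 ↔ ∃ t < sw.1.length, p.val = (sw.1.take t).sum

/-- `sw = (s, w)` is a pair consisting of a composition `s` of `n` and a permutation word
`w` of `{1,…,n}` whose right inversion vector vanishes at each position
`p_t = 1 + s_1 + … + s_{t-1}` (0-indexed: `p_t = s_1 + … + s_{t-1}`), i.e. `w` has a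
right-to-left minimum at each of these positions. -/
def GoodPair (n : ℕ) (sw : List ℕ × (Fin n → Fin n)) : Prop :=
  (∀ a ∈ sw.1, 0 < a) ∧ sw.1.sum = n ∧ Function.Bijective sw.2 ∧
    ∀ t < sw.1.length, ∀ p q : Fin n, p.val = (sw.1.take t).sum → p < q → sw.2 p < sw.2 q

open Equiv Finset

section CycleKey

variable {n : ℕ} {π : Perm (Fin n)} {x y z : Fin n}

theorem cycleMin_le (h : π.SameCycle x y) : cycleMin π x ≤ y :=
  min'_le _ _ (mem_filter.2 ⟨mem_univ _, h⟩)

theorem sameCycle_cycleMin (π : Perm (Fin n)) (x : Fin n) : π.SameCycle x (cycleMin π x) :=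
  (mem_filter.1 (min'_mem _ _)).2

theorem cycleMin_le_self (π : Perm (Fin n)) (x : Fin n) : cycleMin π x ≤ x :=
  cycleMin_le (Perm.SameCycle.refl _ _)

theorem cycleMin_eq_cycleMin_iff : cycleMin π x = cycleMin π y ↔ π.SameCycle x y := by
  refine ⟨fun h => (sameCycle_cycleMin π x).trans (h ▸ (sameCycle_cycleMin π y).symm),
    fun h => le_antisymm ?_ ?_⟩
  · exact cycleMin_le (h.trans (sameCycle_cycleMin π y))
  · exact cycleMin_le (h.symm.trans (sameCycle_cycleMin π x))

theorem cycleMin_cycleMin (π : Perm (Fin n)) (x : Fin n) :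
    cycleMin π (cycleMin π x) = cycleMin π x :=
  cycleMin_eq_cycleMin_iff.2 (sameCycle_cycleMin π x).symm

theorem cycleMin_pow_apply (π : Perm (Fin n)) (k : ℕ) (x : Fin n) :
    cycleMin π ((π ^ k) x) = cycleMin π x :=
  cycleMin_eq_cycleMin_iff.2 (Perm.sameCycle_pow_left.2 (Perm.SameCycle.refl _ _))

theorem pow_cycleIdx_apply_cycleMin (π : Perm (Fin n)) (x : Fin n) :
    (π ^ cycleIdx π x) (cycleMin π x) = x :=
  Nat.sInf_mem ((sameCycle_cycleMin π x).symm.exists_nat_pow_eq)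

theorem cycleIdx_le {k : ℕ} (h : (π ^ k) (cycleMin π x) = x) : cycleIdx π x ≤ k :=
  Nat.sInf_le h

theorem cycleIdx_eq_zero_iff : cycleIdx π x = 0 ↔ cycleMin π x = x := by
  refine ⟨fun h => ?_, fun h => Nat.eq_zero_of_le_zero (cycleIdx_le (by simpa using h))⟩
  simpa [h] using pow_cycleIdx_apply_cycleMin π x

theorem cycleIdx_cycleMin (π : Perm (Fin n)) (x : Fin n) : cycleIdx π (cycleMin π x) = 0 :=
  cycleIdx_eq_zero_iff.2 (cycleMin_cycleMin π x)

theorem cycleIdx_pow_apply_cycleMin {k : ℕ} (hk : k ≤ cycleIdx π x) :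
    cycleIdx π ((π ^ k) (cycleMin π x)) = k := by
  set y := (π ^ k) (cycleMin π x)
  have hmin : cycleMin π y = cycleMin π x := by
    rw [cycleMin_pow_apply, cycleMin_cycleMin]
  refine le_antisymm (cycleIdx_le (by rw [hmin])) (by_contra fun hlt => ?_)
  have : (π ^ (cycleIdx π x - k + cycleIdx π y)) (cycleMin π x) = x := by
    rw [pow_add, Perm.mul_apply, ← hmin, pow_cycleIdx_apply_cycleMin, ← Perm.mul_apply,
      ← pow_add, Nat.sub_add_cancel hk, pow_cycleIdx_apply_cycleMin]
  have := cycleIdx_le this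
  omega

theorem cycleIdx_apply_of_ne (h : π x ≠ cycleMin π x) :
    cycleIdx π (π x) = cycleIdx π x + 1 := by
  have hmin : cycleMin π (π x) = cycleMin π x := by simpa using cycleMin_pow_apply π 1 x
  have hpos : cycleIdx π (π x) ≠ 0 := fun h0 => h (hmin ▸ (cycleIdx_eq_zero_iff.1 h0).symm)
  have hprev : (π ^ (cycleIdx π (π x) - 1)) (cycleMin π x) = x := by
    apply π.injective
    rw [← Perm.mul_apply, ← pow_succ', Nat.sub_add_cancel (Nat.pos_of_ne_zero hpos), ← hmin,
      pow_cycleIdx_apply_cycleMin]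
  have := cycleIdx_le hprev
  refine le_antisymm (cycleIdx_le ?_) (by omega)
  rw [hmin, pow_succ', Perm.mul_apply, pow_cycleIdx_apply_cycleMin]

noncomputable def cycleKey (π : Perm (Fin n)) (x : Fin n) : Lex (Fin n × ℕ) :=
  toLex (cycleMin π x, cycleIdx π x)

theorem cycleKey_lt_cycleKey : cycleKey π x < cycleKey π y ↔
    cycleMin π x < cycleMin π y ∨
      cycleMin π x = cycleMin π y ∧ cycleIdx π x < cycleIdx π y :=
  Prod.Lex.toLex_lt_toLex

theorem cycleMin_le_cycleMin_of_cycleKey_le (h : cycleKey π x ≤ cycleKey π y) :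
    cycleMin π x ≤ cycleMin π y :=
  Prod.Lex.monotone_fst_ofLex h

theorem cycleKey_injective (π : Perm (Fin n)) : Function.Injective (cycleKey π) := by
  intro x y h
  obtain ⟨hmin, hidx⟩ := Prod.mk.inj (toLex.injective h)
  rw [← pow_cycleIdx_apply_cycleMin π x, ← pow_cycleIdx_apply_cycleMin π y, hmin, hidx]

theorem apply_eq_of_cycleKey_eq (h : cycleKey π z = toLex (cycleMin π x, cycleIdx π x + 1)) :
    π x = z := by
  obtain ⟨hmin, hidx⟩ := Prod.mk.inj (toLex.injective h)
  rw [← pow_cycleIdx_apply_cycleMin π z, hmin, hidx, pow_succ', Perm.mul_apply,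
    pow_cycleIdx_apply_cycleMin]

/-- Unless `π' x` closes its cycle, its key is the successor of the key of `x`, and only
`π x` can carry that key. -/
theorem apply_eq_of_cycleKey_eq_of_ne {π' : Perm (Fin n)} (h : cycleKey π = cycleKey π')
    (hx : π' x ≠ cycleMin π' x) : π x = π' x := by
  have hmin : cycleMin π' (π' x) = cycleMin π' x := by simpa using cycleMin_pow_apply π' 1 x
  obtain ⟨hxmin, hxidx⟩ := Prod.mk.inj (toLex.injective (congrFun h x))
  apply apply_eq_of_cycleKey_eq
  rw [h, cycleKey, hmin, cycleIdx_apply_of_ne hx, hxmin, hxidx]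

theorem eq_of_cycleKey_eq {π' : Perm (Fin n)} (h : cycleKey π = cycleKey π') : π = π' := by
  ext1 x
  by_cases hx : π x = cycleMin π x
  · by_cases hx' : π' x = cycleMin π' x
    · rw [hx, hx']
      exact congrArg (fun k => (ofLex k).1) (congrFun h x)
    · exact apply_eq_of_cycleKey_eq_of_ne h hx'
  · exact (apply_eq_of_cycleKey_eq_of_ne h.symm hx).symm

end CycleKey

theorem Finset.card_Icc_le_card_Icc_of_strictMonoOn {α β : Type*} [LinearOrder α]
    [PartialOrder β] [LocallyFiniteOrder α] [LocallyFiniteOrder β] {f : α → β} {a b : α}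
    (hf : StrictMonoOn f (Set.Icc a b)) : #(Icc a b) ≤ #(Icc (f a) (f b)) := by
  refine card_le_card_of_injOn f (fun x hx => ?_) (by simpa using hf.injOn)
  simp only [coe_Icc, Set.mem_Icc] at hx ⊢
  exact ⟨hf.monotoneOn ⟨le_rfl, hx.1.trans hx.2⟩ hx hx.1,
    hf.monotoneOn hx ⟨hx.1.trans hx.2, le_rfl⟩ hx.2⟩

section StdCycleWord

variable {n : ℕ} {π : Perm (Fin n)} {w : Fin n → Fin n}

theorem isStdCycleWord_iff :
    IsStdCycleWord π w ↔ Function.Bijective w ∧ StrictMono (cycleKey π ∘ w) := by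
  refine and_congr_right fun _ => forall₂_congr fun p q => imp_congr_right fun _ => ?_
  exact cycleKey_lt_cycleKey.symm

theorem exists_isStdCycleWord (π : Perm (Fin n)) : ∃ w, IsStdCycleWord π w := by
  refine ⟨Tuple.sort (cycleKey π), isStdCycleWord_iff.2 ⟨(Tuple.sort _).bijective, ?_⟩⟩
  exact (Tuple.monotone_sort _).strictMono_of_injective
    ((cycleKey_injective π).comp (Tuple.sort _).injective)

theorem IsStdCycleWord.unique {w' : Fin n → Fin n} (h : IsStdCycleWord π w)
    (h' : IsStdCycleWord π w') : w = w' := by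
  rw [isStdCycleWord_iff] at h h'
  have hrange : Set.range (cycleKey π ∘ w) = Set.range (cycleKey π ∘ w') := by
    rw [h.1.2.range_comp, h'.1.2.range_comp]
  funext p
  exact cycleKey_injective π (congrFun ((h.2.range_inj h'.2).1 hrange) p)

namespace IsStdCycleWord

variable (h : IsStdCycleWord π w)
include h

theorem cycleKey_lt_iff {p q : Fin n} : cycleKey π (w p) < cycleKey π (w q) ↔ p < q :=
  (isStdCycleWord_iff.1 h).2.lt_iff_lt

theorem cycleKey_le_iff {p q : Fin n} : cycleKey π (w p) ≤ cycleKey π (w q) ↔ p ≤ q :=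
  (isStdCycleWord_iff.1 h).2.le_iff_le

theorem lt_of_cycleIdx_eq_zero {p q : Fin n} (hp : cycleIdx π (w p) = 0) (hpq : p < q) :
    w p < w q := by
  have hmin := cycleIdx_eq_zero_iff.1 hp
  rcases cycleKey_lt_cycleKey.1 (h.cycleKey_lt_iff.2 hpq) with hlt | ⟨heq, hlt⟩
  · exact (hmin ▸ hlt).trans_le (cycleMin_le_self π _)
  · refine lt_of_le_of_ne (hmin ▸ heq ▸ cycleMin_le_self π _) fun hpq' => ?_
    rw [hp, ← hpq', ← hmin, heq, cycleIdx_cycleMin] at hlt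
    exact lt_irrefl 0 hlt

theorem isGreatest_cycleMin {q r : Fin n} (hr : w r = cycleMin π (w q)) :
    IsGreatest {p | p ≤ q ∧ cycleIdx π (w p) = 0} r := by
  have hkey : ∀ p, cycleIdx π (w p) = 0 → cycleKey π (w p) = toLex (w p, 0) := fun p hp => by
    rw [cycleKey, cycleIdx_eq_zero_iff.1 hp, hp]
  have hr0 : cycleIdx π (w r) = 0 := by rw [hr, cycleIdx_cycleMin]
  refine ⟨⟨h.cycleKey_le_iff.1 ?_, hr0⟩, fun p ⟨hpq, hp⟩ => h.cycleKey_le_iff.1 ?_⟩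
  · rw [hkey r hr0, hr, cycleKey]
    exact Prod.Lex.toLex_mono ⟨le_rfl, Nat.zero_le _⟩
  · have hle := cycleMin_le_cycleMin_of_cycleKey_le (h.cycleKey_le_iff.2 hpq)
    rw [cycleIdx_eq_zero_iff.1 hp, ← hr] at hle
    rw [hkey p hp, hkey r hr0]
    exact Prod.Lex.toLex_le_toLex'.2 ⟨hle, fun _ => le_rfl⟩

/-- The letters from the start `r` of a cycle up to position `q` have increasing indices, and
the letters `π ^ k (w r)` for `k ≤ cycleIdx π (w q)` sit in increasing positions between `r`
and `q`: counting both ways pins the index down. -/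
theorem cycleIdx_eq_sub {q r : Fin n} (hr : w r = cycleMin π (w q)) :
    cycleIdx π (w q) = q - r := by
  have hrq : r ≤ q := (h.isGreatest_cycleMin hr).1.1
  have hr' : cycleMin π (w r) = cycleMin π (w q) := by rw [hr, cycleMin_cycleMin]
  have hmin : ∀ p ∈ Set.Icc r q, cycleMin π (w p) = cycleMin π (w q) := fun p hp =>
    le_antisymm (cycleMin_le_cycleMin_of_cycleKey_le (h.cycleKey_le_iff.2 hp.2))
      (hr' ▸ cycleMin_le_cycleMin_of_cycleKey_le (h.cycleKey_le_iff.2 hp.1))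
  have hidx : StrictMonoOn (fun p => cycleIdx π (w p)) (Set.Icc r q) := by
    intro p hp p' hp' hpp'
    rcases cycleKey_lt_cycleKey.1 (h.cycleKey_lt_iff.2 hpp') with hlt | ⟨-, hlt⟩
    · rw [hmin p hp, hmin p' hp'] at hlt
      exact absurd hlt (lt_irrefl _)
    · exact hlt
  let e := Equiv.ofBijective w h.1
  set i := cycleIdx π (w q)
  have hpos : StrictMonoOn (fun k => e.symm ((π ^ k) (cycleMin π (w q)))) (Set.Icc 0 i) := by
    have hkey : ∀ k ≤ i, cycleKey π (w (e.symm ((π ^ k) (cycleMin π (w q))))) =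
        toLex (cycleMin π (w q), k) := fun k hk => by
      rw [show w _ = _ from e.apply_symm_apply _, cycleKey, cycleMin_pow_apply,
        cycleMin_cycleMin, cycleIdx_pow_apply_cycleMin hk]
    intro k hk k' hk' hkk'
    rw [← h.cycleKey_lt_iff, hkey k hk.2, hkey k' hk'.2]
    exact Prod.Lex.toLex_lt_toLex.2 (Or.inr ⟨rfl, hkk'⟩)
  have hle := card_Icc_le_card_Icc_of_strictMonoOn hidx
  have hge := card_Icc_le_card_Icc_of_strictMonoOn hpos
  have he0 : e.symm ((π ^ 0) (cycleMin π (w q))) = r := e.symm_apply_eq.2 hr.symm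
  have hei : e.symm ((π ^ i) (cycleMin π (w q))) = q :=
    e.symm_apply_eq.2 (pow_cycleIdx_apply_cycleMin π (w q))
  simp only [hr, cycleIdx_cycleMin, he0, hei, Nat.card_Icc, Fin.card_Icc] at hle hge
  omega

end IsStdCycleWord

end StdCycleWord

theorem val_finRotate {m : ℕ} (j : Fin m) : (finRotate m j : ℕ) = (j + 1) % m := by
  rw [finRotate_apply, Fin.val_add, Fin.val_one', Nat.add_mod_mod]

namespace Composition

variable {n : ℕ} (c : Composition n)

def IsBlockStart (p : Fin n) : Prop :=
  ∃ t < c.length, (p : ℕ) = c.sizeUpTo t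

def blockStart (p : Fin n) : Fin n :=
  ⟨c.sizeUpTo (c.index p), (c.sizeUpTo_index_le p).trans_lt p.2⟩

theorem isBlockStart_iff_castSucc_mem_boundaries {p : Fin n} :
    c.IsBlockStart p ↔ p.castSucc ∈ c.boundaries := by
  simp only [boundaries, mem_map, mem_univ, true_and, Fin.ext_iff]
  constructor
  · rintro ⟨t, ht, hp⟩
    exact ⟨⟨t, by omega⟩, hp.symm⟩
  · rintro ⟨t, ht⟩
    have hlt : (t : ℕ) < c.length := by
      refine lt_of_le_of_ne (Nat.lt_succ_iff.1 t.2) fun hl => ?_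
      have := c.sizeUpTo_ofLength_le t hl.ge
      have : c.sizeUpTo t = p := ht
      omega
    exact ⟨t, hlt, ht.symm⟩

theorem eq_of_isBlockStart_iff {c' : Composition n}
    (h : ∀ p, c.IsBlockStart p ↔ c'.IsBlockStart p) : c = c' := by
  refine (compositionEquiv n).injective (CompositionAsSet.ext (Finset.ext fun b => ?_))
  induction b using Fin.lastCases with
  | last => exact iff_of_true c.toCompositionAsSet.getLast_mem c'.toCompositionAsSet.getLast_mem
  | cast p =>
    change p.castSucc ∈ c.boundaries ↔ p.castSucc ∈ c'.boundaries
    rw [← isBlockStart_iff_castSucc_mem_boundaries, ← isBlockStart_iff_castSucc_mem_boundaries]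
    exact h p

theorem exists_isBlockStart_iff (P : Fin n → Prop) (h0 : ∀ p : Fin n, (p : ℕ) = 0 → P p) :
    ∃ c : Composition n, ∀ p, c.IsBlockStart p ↔ P p := by
  classical
  let d : CompositionAsSet n :=
    { boundaries := insert (Fin.last n) ((univ.filter P).map Fin.castSuccEmb)
      zero_mem := by
        rcases Nat.eq_zero_or_pos n with rfl | hn
        · exact mem_insert_self _ _
        · exact mem_insert_of_mem
            (mem_map.2 ⟨⟨0, hn⟩, by simpa using h0 ⟨0, hn⟩ rfl, rfl⟩)
      getLast_mem := mem_insert_self _ _ }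
  refine ⟨d.toComposition, fun p => ?_⟩
  rw [isBlockStart_iff_castSucc_mem_boundaries, CompositionAsSet.toComposition_boundaries]
  simp [d, Fin.castSucc_ne_last]

theorem blockStart_le (p : Fin n) : c.blockStart p ≤ p :=
  c.sizeUpTo_index_le p

theorem isBlockStart_blockStart (p : Fin n) : c.IsBlockStart (c.blockStart p) :=
  ⟨c.index p, (c.index p).2, rfl⟩

theorem le_blockStart {p r : Fin n} (hr : c.IsBlockStart r) (hrp : r ≤ p) :
    r ≤ c.blockStart p := by
  obtain ⟨t, -, hrt⟩ := hr
  have ht : t ≤ c.index p := by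
    by_contra! hlt
    have := c.monotone_sizeUpTo (show (c.index p : ℕ) + 1 ≤ t by omega)
    have := c.lt_sizeUpTo_index_succ p
    simp only [Fin.le_def] at hrp
    rw [Fin.val_succ] at this
    omega
  rw [Fin.le_def, hrt]
  exact c.monotone_sizeUpTo ht

theorem isGreatest_blockStart (p : Fin n) :
    IsGreatest {r | r ≤ p ∧ c.IsBlockStart r} (c.blockStart p) :=
  ⟨⟨c.blockStart_le p, c.isBlockStart_blockStart p⟩, fun _ hr => c.le_blockStart hr.2 hr.1⟩

theorem isBlockStart_iff_blockStart_eq {p : Fin n} : c.IsBlockStart p ↔ c.blockStart p = p :=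
  ⟨fun h => le_antisymm (c.blockStart_le p) (c.le_blockStart h le_rfl),
    fun h => h ▸ c.isBlockStart_blockStart p⟩

theorem index_blockStart (p : Fin n) : c.index (c.blockStart p) = c.index p :=
  c.index_embedding (c.index p) ⟨0, c.one_le_blocksFun _⟩

theorem blockStart_blockStart (p : Fin n) : c.blockStart (c.blockStart p) = c.blockStart p :=
  c.isBlockStart_iff_blockStart_eq.1 (c.isBlockStart_blockStart p)

theorem sub_blockStart_lt (p : Fin n) : (p : ℕ) - c.blockStart p < c.blocksFun (c.index p) :=
  (c.invEmbedding p).2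

def blockRotation : Perm (Fin n) :=
  c.blocksFinEquiv.permCongr (Equiv.sigmaCongrRight fun i => finRotate (c.blocksFun i))

theorem index_blockRotation (p : Fin n) : c.index (c.blockRotation p) = c.index p :=
  c.index_embedding _ _

theorem val_blockRotation (p : Fin n) :
    (c.blockRotation p : ℕ) =
      c.blockStart p + (p - c.blockStart p + 1) % c.blocksFun (c.index p) :=
  congrArg (c.sizeUpTo (c.index p) + ·) (val_finRotate (c.invEmbedding p))

theorem index_blockRotation_pow (k : ℕ) (p : Fin n) :
    c.index ((c.blockRotation ^ k) p) = c.index p := by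
  induction k with
  | zero => rfl
  | succ k ih => rw [pow_succ', Perm.mul_apply, index_blockRotation, ih]

theorem blockStart_blockRotation_pow (k : ℕ) (p : Fin n) :
    c.blockStart ((c.blockRotation ^ k) p) = c.blockStart p := by
  simp only [blockStart, index_blockRotation_pow]

theorem val_blockRotation_pow (k : ℕ) (p : Fin n) : ((c.blockRotation ^ k) p : ℕ) =
    c.blockStart p + (p - c.blockStart p + k) % c.blocksFun (c.index p) := by
  induction k with
  | zero =>
    have := Fin.le_def.1 (c.blockStart_le p)
    rw [Nat.add_zero, Nat.mod_eq_of_lt (c.sub_blockStart_lt p), pow_zero, Perm.one_apply]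
    omega
  | succ k ih =>
    rw [pow_succ', Perm.mul_apply, val_blockRotation, blockStart_blockRotation_pow,
      index_blockRotation_pow, ih, Nat.add_sub_cancel_left, Nat.mod_add_mod, Nat.add_assoc]

theorem val_blockRotation_pow_blockStart (k : ℕ) (p : Fin n) :
    ((c.blockRotation ^ k) (c.blockStart p) : ℕ) =
      c.blockStart p + k % c.blocksFun (c.index p) := by
  rw [val_blockRotation_pow, blockStart_blockStart, index_blockStart, Nat.sub_self, Nat.zero_add]

theorem blockRotation_pow_blockStart (p : Fin n) :
    (c.blockRotation ^ ((p : ℕ) - c.blockStart p)) (c.blockStart p) = p := by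
  have := Fin.le_def.1 (c.blockStart_le p)
  ext
  rw [val_blockRotation_pow_blockStart, Nat.mod_eq_of_lt (c.sub_blockStart_lt p)]
  omega

def blockKey (w : Fin n → Fin n) (p : Fin n) : Lex (Fin n × ℕ) :=
  toLex (w (c.blockStart p), (p : ℕ) - c.blockStart p)

variable {w : Fin n → Fin n}

/-- The permutation whose standard cycle form is `w` cut into the blocks of `c`. -/
noncomputable def permOfCycleWord (hw : Function.Bijective w) : Perm (Fin n) :=
  (Equiv.ofBijective w hw).permCongr c.blockRotation

theorem permOfCycleWord_pow_apply (hw : Function.Bijective w) (k : ℕ) (p : Fin n) :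
    (c.permOfCycleWord hw ^ k) (w p) = w ((c.blockRotation ^ k) p) := by
  induction k with
  | zero => rfl
  | succ k ih =>
    rw [pow_succ', Perm.mul_apply, ih, permOfCycleWord, permCongr_apply, pow_succ',
      Perm.mul_apply]
    exact congrArg (fun q => w (c.blockRotation q)) ((Equiv.ofBijective w hw).symm_apply_apply _)

variable (hw : Function.Bijective w) (hgood : ∀ p q, c.IsBlockStart p → p < q → w p < w q)
include hgood

theorem cycleMin_permOfCycleWord (p : Fin n) :
    cycleMin (c.permOfCycleWord hw) (w p) = w (c.blockStart p) := by
  refine le_antisymm (cycleMin_le ?_) ?_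
  · have hp :
        (c.permOfCycleWord hw ^ ((p : ℕ) - c.blockStart p)) (w (c.blockStart p)) = w p := by
      rw [permOfCycleWord_pow_apply, blockRotation_pow_blockStart]
    exact (hp ▸ Perm.sameCycle_pow_right.2 (Perm.SameCycle.refl _ _)).symm
  · obtain ⟨k, hk⟩ := (sameCycle_cycleMin (c.permOfCycleWord hw) (w p)).exists_nat_pow_eq
    rw [← hk, permOfCycleWord_pow_apply, ← c.blockStart_blockRotation_pow k p]
    rcases (c.blockStart_le ((c.blockRotation ^ k) p)).lt_or_eq with hlt | heq
    · exact (hgood _ _ (c.isBlockStart_blockStart _) hlt).le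
    · rw [heq]

theorem cycleKey_permOfCycleWord (p : Fin n) :
    cycleKey (c.permOfCycleWord hw) (w p) = c.blockKey w p := by
  have hidx : cycleIdx (c.permOfCycleWord hw) (w p) = p - c.blockStart p := by
    have hpow := pow_cycleIdx_apply_cycleMin (c.permOfCycleWord hw) (w p)
    rw [c.cycleMin_permOfCycleWord hw hgood, permOfCycleWord_pow_apply] at hpow
    have hval := congrArg Fin.val (hw.1 hpow)
    rw [val_blockRotation_pow_blockStart] at hval
    refine le_antisymm (cycleIdx_le ?_) ?_
    · rw [c.cycleMin_permOfCycleWord hw hgood, permOfCycleWord_pow_apply,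
        blockRotation_pow_blockStart]
    · have := Nat.mod_le (cycleIdx (c.permOfCycleWord hw) (w p)) (c.blocksFun (c.index p))
      omega
  rw [cycleKey, c.cycleMin_permOfCycleWord hw hgood, hidx, blockKey]

end Composition

section StdCycleData

variable {n : ℕ} {π : Perm (Fin n)} {w : Fin n → Fin n} {c : Composition n}

theorem IsStdCycleWord.cycleIdx_eq_zero_of_val_eq_zero (h : IsStdCycleWord π w) {p : Fin n}
    (hp : (p : ℕ) = 0) : cycleIdx π (w p) = 0 := by
  obtain ⟨r, hr⟩ := h.1.2 (cycleMin π (w p))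
  have hrp : r = p := Fin.ext (by have := Fin.le_def.1 (h.isGreatest_cycleMin hr).1.1; omega)
  rw [← hrp, hr, cycleIdx_cycleMin]

theorem IsStdCycleWord.cycleKey_eq_blockKey (h : IsStdCycleWord π w)
    (hS : ∀ p, cycleIdx π (w p) = 0 ↔ c.IsBlockStart p) (q : Fin n) :
    cycleKey π (w q) = c.blockKey w q := by
  obtain ⟨r, hr⟩ := h.1.2 (cycleMin π (w q))
  have hgreatest := h.isGreatest_cycleMin hr
  simp_rw [hS] at hgreatest
  rw [cycleKey, ← hr, h.cycleIdx_eq_sub hr, hgreatest.unique (c.isGreatest_blockStart q),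
    Composition.blockKey]

theorem isStdCycleWord_of_cycleKey_eq (hw : Function.Bijective w)
    (hgood : ∀ p q, c.IsBlockStart p → p < q → w p < w q)
    (hkey : ∀ p, cycleKey π (w p) = c.blockKey w p) : IsStdCycleWord π w := by
  refine isStdCycleWord_iff.2 ⟨hw, fun p q hpq => ?_⟩
  simp only [Function.comp_apply, hkey, Composition.blockKey]
  rcases (c.le_blockStart (c.isBlockStart_blockStart p)
    ((c.blockStart_le p).trans hpq.le)).lt_or_eq with hlt | heq
  · exact Prod.Lex.toLex_lt_toLex.2 (Or.inl (hgood _ _ (c.isBlockStart_blockStart p) hlt))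
  · refine Prod.Lex.toLex_lt_toLex.2 (Or.inr ⟨congrArg w heq, ?_⟩)
    have := Fin.le_def.1 (c.blockStart_le p)
    rw [heq]
    omega

theorem cycleIdx_eq_zero_iff_isBlockStart (hkey : ∀ p, cycleKey π (w p) = c.blockKey w p)
    (p : Fin n) : cycleIdx π (w p) = 0 ↔ c.IsBlockStart p := by
  have hidx : cycleIdx π (w p) = p - c.blockStart p :=
    congrArg (fun k => (ofLex k).2) (hkey p)
  rw [hidx, c.isBlockStart_iff_blockStart_eq, Fin.ext_iff]
  have := Fin.le_def.1 (c.blockStart_le p)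
  omega

theorem stdCycleData_iff {s : List ℕ} :
    StdCycleData π (s, w) ↔ ∃ c : Composition n, c.blocks = s ∧ IsStdCycleWord π w ∧
      ∀ p, cycleIdx π (w p) = 0 ↔ c.IsBlockStart p := by
  constructor
  · rintro ⟨hw, hpos, hsum, hS⟩
    exact ⟨⟨s, fun h => hpos _ h, hsum⟩, rfl, hw, hS⟩
  · rintro ⟨c, rfl, hw, hS⟩
    exact ⟨hw, fun _ => c.blocks_pos, c.blocks_sum, hS⟩

theorem goodPair_iff {s : List ℕ} :
    GoodPair n (s, w) ↔ ∃ c : Composition n, c.blocks = s ∧ Function.Bijective w ∧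
      ∀ p q, c.IsBlockStart p → p < q → w p < w q := by
  constructor
  · rintro ⟨hpos, hsum, hw, hgood⟩
    exact ⟨⟨s, fun h => hpos _ h, hsum⟩, rfl, hw,
      fun p q ⟨t, ht, hp⟩ => hgood t ht p q hp⟩
  · rintro ⟨c, rfl, hw, hgood⟩
    exact ⟨fun _ => c.blocks_pos, c.blocks_sum, hw,
      fun t ht p q hp => hgood p q ⟨t, ht, hp⟩⟩

end StdCycleData

section

variable {n : ℕ} {π : Perm (Fin n)}

theorem existsUnique_stdCycleData (π : Perm (Fin n)) : ∃! sw, StdCycleData π sw := by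
  obtain ⟨w, hw⟩ := exists_isStdCycleWord π
  obtain ⟨c, hc⟩ := Composition.exists_isBlockStart_iff (fun p => cycleIdx π (w p) = 0)
    fun _ hp => hw.cycleIdx_eq_zero_of_val_eq_zero hp
  refine ⟨(c.blocks, w), stdCycleData_iff.2 ⟨c, rfl, hw, fun p => (hc p).symm⟩, ?_⟩
  rintro ⟨s', w'⟩ h'
  obtain ⟨c', rfl, hw', hS'⟩ := stdCycleData_iff.1 h'
  obtain rfl := hw'.unique hw
  rw [c'.eq_of_isBlockStart_iff fun p => (hS' p).symm.trans (hc p).symm]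

theorem StdCycleData.goodPair {sw : List ℕ × (Fin n → Fin n)} (h : StdCycleData π sw) :
    GoodPair n sw := by
  obtain ⟨s, w⟩ := sw
  obtain ⟨c, rfl, hw, hS⟩ := stdCycleData_iff.1 h
  exact goodPair_iff.2
    ⟨c, rfl, hw.1, fun p q hp hpq => hw.lt_of_cycleIdx_eq_zero ((hS p).2 hp) hpq⟩

theorem GoodPair.existsUnique_stdCycleData {sw : List ℕ × (Fin n → Fin n)}
    (h : GoodPair n sw) :
    ∃! π, StdCycleData π sw := by
  obtain ⟨s, w⟩ := sw
  obtain ⟨c, rfl, hw, hgood⟩ := goodPair_iff.1 h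
  have hkey := c.cycleKey_permOfCycleWord hw hgood
  refine ⟨c.permOfCycleWord hw, stdCycleData_iff.2 ⟨c, rfl,
    isStdCycleWord_of_cycleKey_eq hw hgood hkey, cycleIdx_eq_zero_iff_isBlockStart hkey⟩,
    fun π hπ => ?_⟩
  obtain ⟨c', hc', hπw, hS⟩ := stdCycleData_iff.1 hπ
  obtain rfl : c' = c := Composition.ext hc'
  refine eq_of_cycleKey_eq (funext fun x => ?_)
  obtain ⟨p, rfl⟩ := hw.2 x
  rw [hπw.cycleKey_eq_blockKey hS, hkey]

end

theorem stmt_9_general (n : ℕ) :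
    (∀ π : Equiv.Perm (Fin n), ∃! sw : List ℕ × (Fin n → Fin n), StdCycleData π sw) ∧
    (∀ (π : Equiv.Perm (Fin n)) (sw : List ℕ × (Fin n → Fin n)),
      StdCycleData π sw → GoodPair n sw) ∧
    (∀ sw : List ℕ × (Fin n → Fin n), GoodPair n sw →
      ∃! π : Equiv.Perm (Fin n), StdCycleData π sw) :=
  ⟨existsUnique_stdCycleData, fun _ _ h => h.goodPair, fun _ h => h.existsUnique_stdCycleData⟩

/-- The map sending a permutation `π` of `{1,…,n}` to the pair (cycle lengths of `π` in
standard cycle order, word of the standard cycle form of `π`) is well defined and is a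
bijection onto the set of pairs (composition of `n`, permutation word of `{1,…,n}` with
a right-to-left minimum at each partial-sum position of the composition). -/
theorem stmt_9 (n : ℕ) (hn : 1 ≤ n) :
    (∀ π : Equiv.Perm (Fin n), ∃! sw : List ℕ × (Fin n → Fin n), StdCycleData π sw) ∧
    (∀ (π : Equiv.Perm (Fin n)) (sw : List ℕ × (Fin n → Fin n)),
      StdCycleData π sw → GoodPair n sw) ∧
    (∀ sw : List ℕ × (Fin n → Fin n), GoodPair n sw →
      ∃! π : Equiv.Perm (Fin n), StdCycleData π sw) :=
  stmt_9_general n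
end

section
/- Let n ≥ 1. The number of integer sequences (c_1,…,c_n) with 0 ≤ c_i ≤ n − i for all i that satisfy the condition 'for every pair of indices i < j with c_i ≠ 0, c_j ≠ 0, and c_k = 0 for all k with i < k < j, one has c_i − c_j ≤ j − i − 1' equals the n-th Catalan number (1/(n+1))·C(2n, n). -/
/-!
Write `S` for the support of `c` and `T` for the set of values `i + c i`, `i ∈ S`. The gap
condition says exactly that `i ↦ i + c i` is strictly increasing on `S`, so `c` amounts to two
equinumerous subsets `S, T` of `{0, …, n - 1}` whose order-preserving matching sends every
`s ∈ S` to a larger element of `T`. By counting, this is the ballot condition that no prefix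
`{x ∈ T | x ≤ t}` is larger than `{x ∈ S | x < t}`. Reading `t = 0, …, n - 1` in turn and writing
`D` or `U` according as `t ∈ T` or not, then `U` or `D` according as `t ∈ S` or not, turns ballot
pairs bijectively into Dyck words of semilength `n`, which are counted by the Catalan numbers.
-/

open Finset DyckStep

theorem strictMonoOn_iff_forall_adjacent {ι β : Type*} [LinearOrder ι] [LocallyFiniteOrder ι]
    [Preorder β] {f : ι → β} {s : Set ι} :
    StrictMonoOn f s ↔ ∀ a ∈ s, ∀ b ∈ s, a < b → (∀ k ∈ s, a < k → ¬k < b) → f a < f b := by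
  classical
  refine ⟨fun hf a ha b hb hab _ ↦ hf ha hb hab, fun h ↦ ?_⟩
  rw [Set.strictMonoOn_iff_strictMono, strictMono_iff_forall_covBy]
  rintro ⟨a, ha⟩ ⟨b, hb⟩ hab
  exact h a ha b hb hab.1 fun k hk ↦ hab.2 (c := ⟨k, hk⟩)

theorem StrictMonoOn.eqOn_of_image_eq {ι β : Type*} [LinearOrder ι] [WellFoundedLT ι]
    [Preorder β] {f g : ι → β} {s : Set ι} (hf : StrictMonoOn f s) (hg : StrictMonoOn g s)
    (h : f '' s = g '' s) : s.EqOn f g := fun i hi ↦ by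
  have := DFunLike.congr_fun
    (Subsingleton.elim ((hf.orderIso f s).trans (OrderIso.setCongr _ _ h)) (hg.orderIso g s))
    (⟨i, hi⟩ : s)
  exact congrArg Subtype.val this

section Ballot
variable {α : Type*} [LinearOrder α]

structure IsBallotPair (S T : Finset α) : Prop where
  card_eq : #S = #T
  card_filter_le : ∀ t, #{x ∈ T | x ≤ t} ≤ #{x ∈ S | x < t}

noncomputable def Finset.orderIsoOfCardEq {S T : Finset α} (h : #S = #T) : S ≃o T :=
  (S.orderIsoOfFin h).symm.trans (T.orderIsoOfFin rfl)

theorem OrderIso.card_filter_lt_apply {S T : Finset α} (e : S ≃o T) (s : S) :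
    #{x ∈ S | x < (s : α)} = #{y ∈ T | y < (e s : α)} := by
  refine card_bij (fun x hx ↦ e ⟨x, (mem_filter.1 hx).1⟩) (fun x hx ↦ ?_) (fun x _ y _ hxy ↦ ?_)
    (fun y hy ↦ ?_)
  · simp only [mem_filter, coe_mem, true_and] at hx ⊢
    exact e.lt_iff_lt.2 (Subtype.mk_lt_mk.2 hx.2)
  · simpa using hxy
  · obtain ⟨hyT, hy⟩ := mem_filter.1 hy
    refine ⟨e.symm ⟨y, hyT⟩, mem_filter.2 ⟨coe_mem _, ?_⟩, by simp⟩
    exact e.symm_apply_lt.2 (Subtype.mk_lt_mk.2 hy)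

theorem IsBallotPair.lt_orderIsoOfCardEq {S T : Finset α} (h : IsBallotPair S T) (s : S) :
    (s : α) < ↑(orderIsoOfCardEq h.card_eq s) := by
  -- The matching preserves ranks, so a partner `t ≤ s` would make `{x ∈ T | x ≤ t}` exceed
  -- `{x ∈ S | x < t}`.
  have hrank := (orderIsoOfCardEq h.card_eq).card_filter_lt_apply s
  set t : α := ↑(orderIsoOfCardEq h.card_eq s)
  by_contra! hts
  have hT : #{y ∈ T | y < t} < #{y ∈ T | y ≤ t} :=
    card_lt_card <| (ssubset_iff_of_subset (monotone_filter_right _ fun _ _ ↦ le_of_lt)).2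
      ⟨t, mem_filter.2 ⟨(orderIsoOfCardEq h.card_eq s).2, le_rfl⟩, by simp⟩
  have hS : #{x ∈ S | x < t} ≤ #{x ∈ S | x < (s : α)} :=
    card_le_card (monotone_filter_right _ fun _ _ hx ↦ hx.trans_le hts)
  have := h.card_filter_le t
  omega

theorem isBallotPair_image {ι : Type*} {s : Finset ι} {g f : ι → α} (hg : Set.InjOn g s)
    (hf : Set.InjOn f s) (hgf : ∀ i ∈ s, g i < f i) : IsBallotPair (s.image g) (s.image f) where
  card_eq := by rw [card_image_of_injOn hg, card_image_of_injOn hf]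
  card_filter_le t := by
    rw [filter_image, filter_image, card_image_of_injOn (hf.mono fun _ hx ↦ (mem_filter.1 hx).1),
      card_image_of_injOn (hg.mono fun _ hx ↦ (mem_filter.1 hx).1)]
    exact card_le_card fun i hi ↦ by
      simp only [mem_filter] at hi ⊢
      exact ⟨hi.1, (hgf i hi.1).trans_le hi.2⟩

end Ballot

theorem Finset.card_filter_lt_add_one (X : Finset ℕ) (k : ℕ) :
    #{x ∈ X | x < k + 1} = #{x ∈ X | x < k} + if k ∈ X then 1 else 0 := by
  have : {x ∈ X | x < k + 1} = {x ∈ X | x < k} ∪ {x ∈ X | x = k} := by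
    ext x; simp only [mem_filter, mem_union, Nat.lt_add_one_iff_lt_or_eq, and_or_left]
  rw [this, card_union_of_disjoint (disjoint_filter.2 fun _ _ h ↦ h.ne), filter_eq']
  split_ifs <;> simp

theorem Finset.filter_lt_eq_self_of_subset_range {X : Finset ℕ} {n t : ℕ} (hX : X ⊆ range n)
    (ht : n ≤ t) : {x ∈ X | x < t} = X :=
  filter_true_of_mem fun _ hx ↦ (mem_range.1 (hX hx)).trans_le ht

namespace BallotWord

def step (S T : Finset ℕ) (m : ℕ) : DyckStep :=
  if m % 2 = 0 then (if m / 2 ∈ T then D else U) else (if m / 2 ∈ S then U else D)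

def word (S T : Finset ℕ) (j : ℕ) : List DyckStep := (List.range j).map (step S T)

variable {S T : Finset ℕ}

theorem word_add_one (j : ℕ) : word S T (j + 1) = word S T j ++ [step S T j] := by
  simp [word, List.range_succ]

theorem step_two_mul (t : ℕ) : step S T (2 * t) = if t ∈ T then D else U := by
  simp [step]

theorem step_two_mul_add_one (t : ℕ) : step S T (2 * t + 1) = if t ∈ S then U else D := by
  simp [step, Nat.add_mod, Nat.add_div]

theorem count_word_two_mul (k : ℕ) :
    (word S T (2 * k)).count U + #{x ∈ T | x < k} = k + #{x ∈ S | x < k} ∧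
    (word S T (2 * k)).count D + #{x ∈ S | x < k} = k + #{x ∈ T | x < k} := by
  induction k with
  | zero => simp [word]
  | succ k ih =>
    rw [show 2 * (k + 1) = 2 * k + 1 + 1 by ring, word_add_one, word_add_one,
      step_two_mul, step_two_mul_add_one, card_filter_lt_add_one, card_filter_lt_add_one]
    split_ifs <;>
      simp only [List.count_append, List.count_cons, List.count_nil, beq_iff_eq, reduceCtorEq,
        reduceIte] <;> omega

theorem count_D_le_count_U_word_two_mul_add_one_iff (t : ℕ) :
    (word S T (2 * t + 1)).count D ≤ (word S T (2 * t + 1)).count U ↔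
      #{x ∈ T | x ≤ t} ≤ #{x ∈ S | x < t} := by
  obtain ⟨hU, hD⟩ := count_word_two_mul (S := S) (T := T) t
  have : {x ∈ T | x ≤ t} = {x ∈ T | x < t + 1} := by simp only [Nat.lt_add_one_iff]
  rw [word_add_one, step_two_mul, this, card_filter_lt_add_one]
  split_ifs <;>
    simp only [List.count_append, List.count_cons, List.count_nil, beq_iff_eq, reduceCtorEq,
      reduceIte] <;> omega

theorem count_D_le_count_U_word (h : ∀ t, #{x ∈ T | x ≤ t} ≤ #{x ∈ S | x < t}) (j : ℕ) :
    (word S T j).count D ≤ (word S T j).count U := by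
  obtain ⟨t, rfl | rfl⟩ := Nat.even_or_odd' j
  · cases t with
    | zero => simp [word]
    | succ t =>
      obtain ⟨hU, hD⟩ := count_word_two_mul (S := S) (T := T) (t + 1)
      have hT : {x ∈ T | x < t + 1} = {x ∈ T | x ≤ t} := by simp only [Nat.lt_add_one_iff]
      have hS := card_filter_lt_add_one S t
      have := h t
      rw [hT] at hU hD
      omega
  · exact (count_D_le_count_U_word_two_mul_add_one_iff t).2 (h t)

theorem take_word (i j : ℕ) : (word S T j).take i = word S T (min i j) := by
  rw [word, ← List.map_take, List.take_range, word]

def upSet (w : List DyckStep) (n : ℕ) : Finset ℕ := {t ∈ range n | w[2 * t + 1]? = some U}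

def downSet (w : List DyckStep) (n : ℕ) : Finset ℕ := {t ∈ range n | w[2 * t]? = some D}

theorem upSet_subset_range (w : List DyckStep) (n : ℕ) : upSet w n ⊆ range n := filter_subset _ _

theorem downSet_subset_range (w : List DyckStep) (n : ℕ) : downSet w n ⊆ range n :=
  filter_subset _ _

theorem word_upSet_downSet {w : List DyckStep} {n : ℕ} (hw : w.length = 2 * n) :
    word (upSet w n) (downSet w n) (2 * n) = w := by
  refine List.ext_getElem? fun m ↦ ?_
  rcases lt_or_ge m (2 * n) with hm | hm
  · rw [word, List.getElem?_map, List.getElem?_range hm, Option.map_some]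
    obtain ⟨t, rfl | rfl⟩ := Nat.even_or_odd' m
    · simp only [step_two_mul, downSet, mem_filter, mem_range,
        List.getElem?_eq_getElem (show 2 * t < w.length by omega), Option.some.injEq]
      cases w[2 * t] <;> simp [show t < n by omega]
    · simp only [step_two_mul_add_one, upSet, mem_filter, mem_range,
        List.getElem?_eq_getElem (show 2 * t + 1 < w.length by omega), Option.some.injEq]
      cases w[2 * t + 1] <;> simp [show t < n by omega]
  · rw [List.getElem?_eq_none (by simpa [word] using hm), List.getElem?_eq_none (by omega)]

theorem upSet_word {n : ℕ} (hS : S ⊆ range n) : upSet (word S T (2 * n)) n = S := by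
  ext t
  by_cases ht : t < n
  · simp [upSet, word, ht, List.getElem?_range (show 2 * t + 1 < 2 * n by omega),
      step_two_mul_add_one]
  · simp only [upSet, mem_filter, mem_range, ht, false_and, false_iff]
    exact fun h ↦ ht (mem_range.1 (hS h))

theorem downSet_word {n : ℕ} (hT : T ⊆ range n) : downSet (word S T (2 * n)) n = T := by
  ext t
  by_cases ht : t < n
  · simp [downSet, word, ht, step_two_mul]
  · simp only [downSet, mem_filter, mem_range, ht, false_and, false_iff]
    exact fun h ↦ ht (mem_range.1 (hT h))

theorem count_word_of_subset_range {n : ℕ} (hS : S ⊆ range n) (hT : T ⊆ range n) :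
    (word S T (2 * n)).count U + #T = n + #S ∧ (word S T (2 * n)).count D + #S = n + #T := by
  simpa only [filter_lt_eq_self_of_subset_range hS le_rfl,
    filter_lt_eq_self_of_subset_range hT le_rfl] using count_word_two_mul (S := S) (T := T) n

end BallotWord

open BallotWord

def ballotPairs (n : ℕ) : Set (Finset ℕ × Finset ℕ) :=
  {p | p.1 ⊆ range n ∧ p.2 ⊆ range n ∧ IsBallotPair p.1 p.2}

def DyckWord.ofBallotPair {n : ℕ} (p : ballotPairs n) : DyckWord where
  toList := word p.1.1 p.1.2 (2 * n)
  count_U_eq_count_D := by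
    have := count_word_of_subset_range p.2.1 p.2.2.1
    have := p.2.2.2.card_eq
    omega
  count_D_le_count_U i := by
    rw [take_word]
    exact count_D_le_count_U_word p.2.2.2.card_filter_le _

theorem isBallotPair_upSet_downSet (p : DyckWord) {n : ℕ} (hp : p.semilength = n) :
    IsBallotPair (upSet p.toList n) (downSet p.toList n) := by
  have hw : p.toList.length = 2 * n := by rw [← p.two_mul_semilength_eq_length, hp]
  have hword := word_upSet_downSet hw
  obtain ⟨hU, hD⟩ := count_word_of_subset_range (S := upSet p.toList n) (T := downSet p.toList n)
    (upSet_subset_range _ _) (downSet_subset_range _ _)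
  have hcount := p.count_U_eq_count_D
  rw [hword] at hU hD
  have card_eq : #(upSet p.toList n) = #(downSet p.toList n) := by omega
  refine ⟨card_eq, fun t ↦ ?_⟩
  rcases lt_or_ge t n with ht | ht
  · rw [← count_D_le_count_U_word_two_mul_add_one_iff,
      ← min_eq_left (show 2 * t + 1 ≤ 2 * n by omega), ← take_word, hword]
    exact p.count_D_le_count_U _
  · rw [filter_lt_eq_self_of_subset_range (upSet_subset_range _ _) ht,
      filter_true_of_mem fun x hx ↦ (mem_range.1 (downSet_subset_range _ _ hx)).le.trans ht]
    exact card_eq.ge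

noncomputable def ballotPairsEquivDyckWord (n : ℕ) :
    ballotPairs n ≃ {p : DyckWord // p.semilength = n} where
  toFun p := ⟨.ofBallotPair p, by
    have := (count_word_of_subset_range p.2.1 p.2.2.1).1
    have := p.2.2.2.card_eq
    change (word _ _ (2 * n)).count U = n
    omega⟩
  invFun p := ⟨(upSet p.1.toList n, downSet p.1.toList n), upSet_subset_range _ _,
    downSet_subset_range _ _, isBallotPair_upSet_downSet p.1 p.2⟩
  left_inv p := by
    obtain ⟨⟨S, T⟩, hS, hT, h⟩ := p
    ext1
    exact Prod.ext (upSet_word hS) (downSet_word hT)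
  right_inv p := by
    ext1
    exact DyckWord.ext (word_upSet_downSet (by rw [← p.1.two_mul_semilength_eq_length, p.2]))

def IsParallelogramCode {n : ℕ} (c : Fin n → ℕ) : Prop :=
  (∀ i : Fin n, ↑i + c i < n) ∧ StrictMonoOn (fun i : Fin n ↦ ↑i + c i) {i | c i ≠ 0}

theorem isParallelogramCode_iff {n : ℕ} (c : Fin n → ℕ) :
    ((∀ i : Fin n, c i ≤ n - (i.val + 1)) ∧
      ∀ i j : Fin n, i < j → c i ≠ 0 → c j ≠ 0 →
        (∀ k : Fin n, i < k → k < j → c k = 0) → c i - c j ≤ j.val - i.val - 1) ↔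
    IsParallelogramCode c := by
  refine and_congr (forall_congr' fun i ↦ by omega) ?_
  rw [strictMonoOn_iff_forall_adjacent]
  refine ⟨fun h a ha b hb hab hgap ↦ ?_, fun h a b hab ha hb hgap ↦ ?_⟩
  · have := h a b hab ha hb fun k hak hkb ↦ by_contra fun hk ↦ hgap k hk hak hkb
    have : a.val < b.val := hab
    omega
  · have := h a ha b hb hab fun k hk hak hkb ↦ hk (hgap k hak hkb)
    have : a.val < b.val := hab
    omega

namespace ParallelogramCode

variable {n : ℕ}

def toBallotPair (c : Fin n → ℕ) : Finset ℕ × Finset ℕ :=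
  (({i | c i ≠ 0} : Finset (Fin n)).image Fin.val,
    ({i | c i ≠ 0} : Finset (Fin n)).image fun i ↦ ↑i + c i)

theorem toBallotPair_mem {c : Fin n → ℕ} (hc : IsParallelogramCode c) :
    toBallotPair c ∈ ballotPairs n := by
  refine ⟨?_, ?_, isBallotPair_image Fin.val_injective.injOn
    (hc.2.injOn.mono fun i hi ↦ (mem_filter.1 hi).2) fun i hi ↦ ?_⟩
  · simp [toBallotPair, subset_iff]
  · simp [toBallotPair, subset_iff, hc.1]
  · have : c i ≠ 0 := (mem_filter.1 hi).2
    omega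

theorem injOn_toBallotPair : Set.InjOn toBallotPair {c : Fin n → ℕ | IsParallelogramCode c} := by
  intro c hc c' hc' h
  obtain ⟨hS, hT⟩ := Prod.ext_iff.1 h
  have hsupp : {i | c i ≠ 0} = {i | c' i ≠ 0} := by
    simpa [Set.ext_iff, Finset.ext_iff] using image_injective Fin.val_injective hS
  have himage :
      (fun i : Fin n ↦ ↑i + c i) '' {i | c i ≠ 0} = (fun i ↦ ↑i + c' i) '' {i | c i ≠ 0} := by
    simpa [toBallotPair, hsupp] using congrArg ((↑) : Finset ℕ → Set ℕ) hT
  funext i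
  by_cases hi : c i = 0
  · simpa [hi, eq_comm] using Set.ext_iff.1 hsupp i
  · have := hc.2.eqOn_of_image_eq (hsupp ▸ hc'.2) himage hi
    simpa using this

noncomputable def ofBallotPair {S T : Finset ℕ} (h : IsBallotPair S T) (i : Fin n) : ℕ :=
  if hi : ↑i ∈ S then ↑(orderIsoOfCardEq h.card_eq ⟨i, hi⟩) - i else 0

variable {S T : Finset ℕ} (h : IsBallotPair S T)

theorem val_add_ofBallotPair {i : Fin n} (hi : ↑i ∈ S) :
    ↑i + ofBallotPair h i = ↑(orderIsoOfCardEq h.card_eq ⟨i, hi⟩) := by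
  have : (i : ℕ) < ↑(orderIsoOfCardEq h.card_eq ⟨i, hi⟩) := h.lt_orderIsoOfCardEq ⟨i, hi⟩
  rw [ofBallotPair, dif_pos hi]
  omega

theorem ofBallotPair_ne_zero_iff {i : Fin n} : ofBallotPair h i ≠ 0 ↔ ↑i ∈ S := by
  refine ⟨fun hc ↦ by_contra fun hi ↦ hc (dif_neg hi), fun hi ↦ ?_⟩
  have : (i : ℕ) < ↑(orderIsoOfCardEq h.card_eq ⟨i, hi⟩) := h.lt_orderIsoOfCardEq ⟨i, hi⟩
  have := val_add_ofBallotPair h hi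
  omega

theorem ofBallotPair_isParallelogramCode (hT : T ⊆ range n) :
    IsParallelogramCode (ofBallotPair (n := n) h) := by
  refine ⟨fun i ↦ ?_, fun i hi j hj hij ↦ ?_⟩
  · by_cases hi : ↑i ∈ S
    · rw [val_add_ofBallotPair h hi]
      exact mem_range.1 (hT (coe_mem _))
    · rw [ofBallotPair, dif_neg hi]
      simp
  · replace hi := (ofBallotPair_ne_zero_iff h).1 hi
    replace hj := (ofBallotPair_ne_zero_iff h).1 hj
    simp only [val_add_ofBallotPair h hi, val_add_ofBallotPair h hj]
    exact (orderIsoOfCardEq h.card_eq).strictMono (Subtype.mk_lt_mk.2 hij)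

theorem toBallotPair_ofBallotPair (hS : S ⊆ range n) :
    toBallotPair (ofBallotPair (n := n) h) = (S, T) := by
  refine Prod.ext (Finset.ext fun x ↦ ?_) (Finset.ext fun y ↦ ?_)
  · simp only [toBallotPair, mem_image, mem_filter, mem_univ, true_and, ofBallotPair_ne_zero_iff]
    refine ⟨fun ⟨i, hi, hix⟩ ↦ hix ▸ hi, fun hx ↦ ⟨⟨x, mem_range.1 (hS hx)⟩, hx, rfl⟩⟩
  · simp only [toBallotPair, mem_image, mem_filter, mem_univ, true_and, ofBallotPair_ne_zero_iff]
    refine ⟨fun ⟨i, hi, hiy⟩ ↦ ?_, fun hy ↦ ?_⟩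
    · rw [← hiy, val_add_ofBallotPair h hi]
      exact coe_mem _
    · set s := (orderIsoOfCardEq h.card_eq).symm ⟨y, hy⟩
      refine ⟨⟨s, mem_range.1 (hS s.2)⟩, s.2, ?_⟩
      rw [val_add_ofBallotPair h s.2]
      simp [s]

theorem bijOn_toBallotPair :
    Set.BijOn toBallotPair {c : Fin n → ℕ | IsParallelogramCode c} (ballotPairs n) :=
  ⟨fun _ hc ↦ toBallotPair_mem hc, injOn_toBallotPair, fun _ hp ↦
    ⟨ofBallotPair hp.2.2, ofBallotPair_isParallelogramCode hp.2.2 hp.2.1,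
      toBallotPair_ofBallotPair hp.2.2 hp.1⟩⟩

end ParallelogramCode

theorem stmt_12_general (n : ℕ) :
    Nat.card {c : Fin n → ℕ //
        (∀ i : Fin n, c i ≤ n - (i.val + 1)) ∧
        ∀ i j : Fin n, i < j → c i ≠ 0 → c j ≠ 0 →
          (∀ k : Fin n, i < k → k < j → c k = 0) →
          c i - c j ≤ j.val - i.val - 1} = catalan n := by
  rw [← DyckWord.card_dyckWord_semilength_eq_catalan, ← Nat.card_eq_fintype_card]
  exact Nat.card_congr <| (Equiv.subtypeEquivRight isParallelogramCode_iff).trans <|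
    (ParallelogramCode.bijOn_toBallotPair.equiv _).trans (ballotPairsEquivDyckWord n)

/-- The number of integer sequences `(c_1,…,c_n)` with `0 ≤ c_i ≤ n - i` (0-indexed:
`c i ≤ n - (i+1)`) such that for every pair of consecutive nonzero entries `c_i, c_j`
(`i < j`, all entries strictly between being zero) one has `c_i - c_j ≤ j - i - 1`,
equals the `n`-th Catalan number `(1/(n+1))·C(2n, n)`. -/
theorem stmt_12 (n : ℕ) (hn : 1 ≤ n) :
    Nat.card {c : Fin n → ℕ //
        (∀ i : Fin n, c i ≤ n - (i.val + 1)) ∧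
        ∀ i j : Fin n, i < j → c i ≠ 0 → c j ≠ 0 →
          (∀ k : Fin n, i < k → k < j → c k = 0) →
          c i - c j ≤ j.val - i.val - 1} = catalan n :=
  stmt_12_general n
end
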